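/- arXiv:1410.0744 — 4 statements merged into one kernel-verified Lean document; each statement's English description precedes it below -/
import Mathlib

section
/- In a spherical isosceles triangle ABC on the unit sphere with side lengths |AB| = |AC| = d where 0 < d < π/2, and |BC| ≥ d, the angle at vertex A satisfies ∠BAC > π/3. -/
open scoped RealInnerProductSpace

noncomputable section

/-- Angular (geodesic) distance on the unit sphere in `ℝ³`. -/
def gdist (x y : EuclideanSpace ℝ (Fin 3)) : ℝ := Real.arccos ⟪x, y⟫

/-- The spherical angle at vertex `A` of the spherical triangle `ABC`, given by the
spherical law of cosines. -/
def sphAngle (A B C : EuclideanSpace ℝ (Fin 3)) : ℝ :=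
  Real.arccos ((Real.cos (gdist B C) - Real.cos (gdist A B) * Real.cos (gdist A C)) /
    (Real.sin (gdist A B) * Real.sin (gdist A C)))

/-- In a spherical isosceles triangle `ABC` on the unit sphere with `|AB| = |AC| = d`,
`0 < d < π/2`, and `|BC| ≥ d`, the angle at `A` satisfies `∠BAC > π/3`. -/
theorem isosceles_angle_gt_pi_div_three
    (A B C : EuclideanSpace ℝ (Fin 3))
    (hA : ‖A‖ = 1) (hB : ‖B‖ = 1) (hC : ‖C‖ = 1)
    (d : ℝ) (hd0 : 0 < d) (hd : d < Real.pi / 2)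
    (hAB : gdist A B = d) (hAC : gdist A C = d)
    (hBC : gdist B C ≥ d) :
    sphAngle A B C > Real.pi / 3 := by
  have hpi := Real.pi_pos
  set e := gdist B C with he
  have hepi : e ≤ Real.pi := Real.arccos_le_pi _
  have hdpi : d ≤ Real.pi := le_trans hBC hepi
  -- cos d > 0, sin d > 0
  have hcpos : 0 < Real.cos d := Real.cos_pos_of_mem_Ioo ⟨by linarith, hd⟩
  have hspos : 0 < Real.sin d := Real.sin_pos_of_pos_of_lt_pi hd0 (by linarith)
  have hcose : Real.cos e ≤ Real.cos d :=
    Real.cos_le_cos_of_nonneg_of_le_pi (le_of_lt hd0) hepi hBC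
  have hc1 : Real.cos d < 1 := by
    nlinarith [Real.sin_sq_add_cos_sq d]
  have hs2 : Real.sin d * Real.sin d = 1 - Real.cos d * Real.cos d := by
    nlinarith [Real.sin_sq_add_cos_sq d]
  set x := (Real.cos e - Real.cos d * Real.cos d) / (Real.sin d * Real.sin d) with hx
  have hxlt : x < 1 / 2 := by
    rw [hx, div_lt_iff₀ (by positivity)]
    nlinarith
  have goal : Real.pi / 3 < Real.arccos x := by
    rcases le_or_gt x (-1) with h | h
    · rw [(Real.arccos_eq_pi).2 h]; linarith
    · have h13 : Real.arccos (1/2 : ℝ) = Real.pi / 3 := by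
        rw [show (1/2 : ℝ) = Real.cos (Real.pi/3) by rw [Real.cos_pi_div_three]]
        exact Real.arccos_cos (by linarith) (by linarith)
      rw [← h13]
      exact Real.strictAntiOn_arccos ⟨le_of_lt h, by linarith⟩
        ⟨by norm_num, by norm_num⟩ hxlt
  simpa [sphAngle, hAB, hAC, ← he, ← hx] using goal
end
end

section
/- For any finite set X on the unit sphere S² with ψ(X) > 0, every vertex of the contact graph CG(X) has degree at most 5. -/
open scoped RealInnerProductSpace
open scoped Classical

noncomputable section

/-!
Let `c = cos d`. Every neighbour `y` of `v` satisfies `⟪v, y⟫ = c`, and two neighbours `y ≠ z`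
satisfy `⟪y, z⟫ ≤ c`. Projecting the neighbours to the tangent plane `v^⊥` gives the vectors
`y - c • v`, and a direct computation shows that the cosine of the angle between two of them is
`(⟪y, z⟫ - c²) / (1 - c²) ≤ c / (1 + c) < 1 / 2`: they pairwise make angles larger than `π / 3`.
Six such directions cannot fit in a plane, since their oriented angles, sorted around the circle,
would leave six gaps of more than `π / 3`.
-/

open Real Module InnerProductGeometry

theorem one_half_le_cos_of_le_pi_div_three {t : ℝ} (h₀ : 0 ≤ t) (h : t ≤ π / 3) :
    1 / 2 ≤ cos t := by
  rw [← cos_pi_div_three]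
  exact cos_le_cos_of_nonneg_of_le_pi h₀ (by linarith [pi_pos]) h

theorem exists_ne_one_half_le_cos_sub {a : ℝ} (T : Finset ℝ) (hT : 6 ≤ T.card)
    (hmem : ∀ x ∈ T, x ∈ Set.Icc a (a + 2 * π)) :
    ∃ x ∈ T, ∃ y ∈ T, x ≠ y ∧ 1 / 2 ≤ cos (x - y) := by
  set g : Fin 6 → ℝ := fun i => T.orderEmbOfFin rfl (Fin.castLE hT i)
  have hg_mono : StrictMono g := (T.orderEmbOfFin rfl).strictMono.comp (Fin.strictMono_castLE hT)
  have hg_mem (i : Fin 6) : g i ∈ T := T.orderEmbOfFin_mem rfl _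
  by_cases hgap : ∃ i j : Fin 6, i < j ∧ g j - g i ≤ π / 3
  · obtain ⟨i, j, hij, hle⟩ := hgap
    exact ⟨g j, hg_mem j, g i, hg_mem i, (hg_mono hij).ne',
      one_half_le_cos_of_le_pi_div_three (sub_nonneg.2 (hg_mono hij).le) hle⟩
  · push Not at hgap
    -- five gaps of more than `π / 3` leave less than `π / 3` to close up the circle
    have hspread : 5 * π / 3 < g 5 - g 0 := by
      linarith [hgap 0 1 (by decide), hgap 1 2 (by decide), hgap 2 3 (by decide),
        hgap 3 4 (by decide), hgap 4 5 (by decide)]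
    refine ⟨g 5, hg_mem 5, g 0, hg_mem 0, (hg_mono (by decide)).ne', ?_⟩
    rw [← cos_two_pi_sub]
    exact one_half_le_cos_of_le_pi_div_three
      (by linarith [(hmem _ (hg_mem 5)).2, (hmem _ (hg_mem 0)).1]) (by linarith)

section InnerProductSpace

variable {E : Type*} [NormedAddCommGroup E] [InnerProductSpace ℝ E]

theorem card_le_five_of_pi_div_three_lt_angle [Fact (finrank ℝ E = 2)] (S : Finset E)
    (hS₀ : ∀ x ∈ S, x ≠ 0) (hS : ∀ x ∈ S, ∀ y ∈ S, x ≠ y → π / 3 < angle x y) :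
    S.card ≤ 5 := by
  by_contra! hcard
  obtain ⟨x₀, hx₀⟩ : S.Nonempty := Finset.card_pos.1 (by omega)
  have : FiniteDimensional ℝ E := .of_fact_finrank_eq_two
  set o : Orientation ℝ E (Fin 2) := (finBasisOfFinrankEq ℝ E Fact.out).orientation
  set θ : E → ℝ := fun y => (o.oangle x₀ y).toReal
  have hθ_sub {y z} (hy : y ∈ S) (hz : z ∈ S) :
      ((θ y - θ z : ℝ) : Angle) = o.oangle z y := by
    rw [Angle.coe_sub, Angle.coe_toReal, Angle.coe_toReal,
      o.oangle_sub_left (hS₀ x₀ hx₀) (hS₀ z hz) (hS₀ y hy)]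
  have hθ_inj : Set.InjOn θ S := by
    intro y hy z hz hyz
    by_contra hne
    have h0 : o.oangle z y = 0 := by rw [← hθ_sub hy hz, hyz, sub_self, Angle.coe_zero]
    rw [o.oangle_eq_zero_iff_angle_eq_zero (hS₀ z hz) (hS₀ y hy)] at h0
    linarith [hS z hz y hy (Ne.symm hne), pi_pos]
  obtain ⟨_, hθy, _, hθz, hne, hcos⟩ := exists_ne_one_half_le_cos_sub (a := -π) (S.image θ)
    (by rw [Finset.card_image_of_injOn hθ_inj]; omega)
    (by
      simp only [Finset.mem_image, forall_exists_index, and_imp, forall_apply_eq_imp_iff₂]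
      exact fun y _ =>
        ⟨(Angle.neg_pi_lt_toReal _).le, by linarith [Angle.toReal_le_pi (o.oangle x₀ y)]⟩)
  obtain ⟨y, hy, rfl⟩ := Finset.mem_image.1 hθy
  obtain ⟨z, hz, rfl⟩ := Finset.mem_image.1 hθz
  have hyz : y ≠ z := fun h => hne (h ▸ rfl)
  rw [← Angle.cos_coe, hθ_sub hy hz, o.cos_oangle_eq_cos_angle (hS₀ z hz) (hS₀ y hy)] at hcos
  have := cos_lt_cos_of_nonneg_of_le_pi (by positivity) (angle_le_pi z y) (hS z hz y hy hyz.symm)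
  rw [cos_pi_div_three] at this
  linarith

theorem inner_sub_smul_sub_smul {v y z : E} (hv : ‖v‖ = 1) {c : ℝ} (hy : ⟪v, y⟫ = c)
    (hz : ⟪v, z⟫ = c) : ⟪y - c • v, z - c • v⟫ = ⟪y, z⟫ - c ^ 2 := by
  have hvv : ⟪v, v⟫ = 1 := by rw [real_inner_self_eq_norm_sq, hv, one_pow]
  simp only [inner_sub_left, inner_sub_right, real_inner_smul_left, real_inner_smul_right,
    hvv, real_inner_comm v y, hy, hz]
  ring

theorem norm_sub_smul_sq {v y : E} (hv : ‖v‖ = 1) (hy : ‖y‖ = 1) {c : ℝ} (hvy : ⟪v, y⟫ = c) :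
    ‖y - c • v‖ ^ 2 = 1 - c ^ 2 := by
  rw [← real_inner_self_eq_norm_sq, inner_sub_smul_sub_smul hv hvy hvy,
    real_inner_self_eq_norm_sq, hy, one_pow]

theorem pi_div_three_lt_angle_sub_smul_sub_smul {v y z : E} (hv : ‖v‖ = 1) (hy : ‖y‖ = 1)
    (hz : ‖z‖ = 1) {c : ℝ} (hc : |c| < 1) (hvy : ⟪v, y⟫ = c) (hvz : ⟪v, z⟫ = c)
    (hyz : ⟪y, z⟫ ≤ c) : π / 3 < angle (y - c • v) (z - c • v) := by
  have hsq : 0 < 1 - c ^ 2 := by nlinarith [abs_lt.1 hc]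
  have hnorm_mul : ‖y - c • v‖ * ‖z - c • v‖ = 1 - c ^ 2 := by
    rw [← norm_sub_smul_sq hv hy hvy, sq, (sq_eq_sq₀ (norm_nonneg _) (norm_nonneg _)).1
      ((norm_sub_smul_sq hv hy hvy).trans (norm_sub_smul_sq hv hz hvz).symm)]
  by_contra! hle
  have hcos := one_half_le_cos_of_le_pi_div_three (angle_nonneg _ _) hle
  rw [cos_angle, hnorm_mul, inner_sub_smul_sub_smul hv hvy hvz, le_div_iff₀ hsq] at hcos
  -- `(⟪y, z⟫ - c²) / (1 - c²) ≤ c / (1 + c) < 1 / 2` since `c < 1`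
  nlinarith [abs_lt.1 hc]

theorem card_le_five_of_inner_eq_of_inner_le [Fact (finrank ℝ E = 3)] {v : E} (hv : ‖v‖ = 1)
    {c : ℝ} (S : Finset E) (hvS : v ∉ S) (hS : ∀ y ∈ S, ‖y‖ = 1) (hSv : ∀ y ∈ S, ⟪v, y⟫ = c)
    (hSS : ∀ y ∈ S, ∀ z ∈ S, y ≠ z → ⟪y, z⟫ ≤ c) : S.card ≤ 5 := by
  by_contra! hcard
  obtain ⟨y₀, hy₀, z₀, hz₀, hyz₀⟩ := Finset.one_lt_card.1 (by omega : 1 < S.card)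
  have hc : |c| < 1 := by
    have hy₀_ne_v : ⟪v, y₀⟫ < 1 :=
      (inner_lt_one_iff_real_of_norm_eq_one hv (hS y₀ hy₀)).2 fun h => hvS (h ▸ hy₀)
    have hS_antipodal (h : c = -1) (y) (hy : y ∈ S) : y = -v :=
      (inner_eq_neg_one_iff_of_norm_eq_one (hS y hy) hv).1 (by rw [real_inner_comm, hSv y hy, h])
    refine abs_lt.2 ⟨lt_of_le_of_ne ?_ fun h => ?_, hSv y₀ hy₀ ▸ hy₀_ne_v⟩
    · exact hSv y₀ hy₀ ▸ neg_one_le_real_inner_of_norm_eq_one hv (hS y₀ hy₀)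
    · exact hyz₀ ((hS_antipodal h.symm y₀ hy₀).trans (hS_antipodal h.symm z₀ hz₀).symm)
  set K := (ℝ ∙ v)ᗮ
  have : Fact (finrank ℝ K = 2) :=
    ⟨Submodule.finrank_orthogonal_span_singleton (norm_ne_zero_iff.1 (by simp [hv]))⟩
  have hP_mem (y : E) : y - ⟪v, y⟫ • v ∈ K := by
    rw [Submodule.mem_orthogonal_singleton_iff_inner_right, inner_sub_right, real_inner_smul_right,
      real_inner_self_eq_norm_sq, hv]
    ring
  set P : E → K := fun y => ⟨y - ⟪v, y⟫ • v, hP_mem y⟩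
  have hP (y) (hy : y ∈ S) : (P y : E) = y - c • v := by simp [P, hSv y hy]
  have hP_inj : Set.InjOn P S := fun y hy z hz h => by
    simpa [hP y hy, hP z hz] using congrArg Subtype.val h
  refine (card_le_five_of_pi_div_three_lt_angle (S.image P) ?_ ?_).not_gt
    (by rwa [Finset.card_image_of_injOn hP_inj])
  · simp only [Finset.mem_image, forall_exists_index, and_imp, forall_apply_eq_imp_iff₂]
    intro y hy hy0
    have := norm_sub_smul_sq hv (hS y hy) (hSv y hy)
    rw [← hP y hy, hy0, ZeroMemClass.coe_zero, norm_zero] at this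
    nlinarith [abs_lt.1 hc]
  · simp only [Finset.mem_image, forall_exists_index, and_imp, forall_apply_eq_imp_iff₂]
    intro y hy z hz hyz
    rw [← Submodule.angle_coe, hP y hy, hP z hz]
    exact pi_div_three_lt_angle_sub_smul_sub_smul hv (hS y hy) (hS z hz) hc (hSv y hy) (hSv z hz)
      (hSS y hy z hz fun h => hyz (h ▸ rfl))

end InnerProductSpace

theorem cos_gdist {x y : EuclideanSpace ℝ (Fin 3)} (hx : ‖x‖ = 1) (hy : ‖y‖ = 1) :
    cos (gdist x y) = ⟪x, y⟫ :=
  cos_arccos (neg_one_le_real_inner_of_norm_eq_one hx hy) (real_inner_le_one_of_norm_eq_one hx hy)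

theorem inner_le_cos_of_le_gdist {x y : EuclideanSpace ℝ (Fin 3)} (hx : ‖x‖ = 1) (hy : ‖y‖ = 1)
    {d : ℝ} (hd : 0 ≤ d) (h : d ≤ gdist x y) : ⟪x, y⟫ ≤ cos d :=
  cos_gdist hx hy ▸ cos_le_cos_of_nonneg_of_le_pi hd (arccos_le_pi _) h

/-- For a finite set `X` on the unit sphere with minimal pairwise angular distance
`d = ψ(X) > 0`, every vertex of the contact graph `CG(X)` has degree at most 5:
the number of points of `X` at distance exactly `d` from a given point `v ∈ X`
is at most 5. -/
theorem contactGraph_degree_le_five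
    (X : Finset (EuclideanSpace ℝ (Fin 3)))
    (hunit : ∀ p ∈ X, ‖p‖ = 1)
    (d : ℝ) (hd : 0 < d)
    (hmin : ∀ p ∈ X, ∀ q ∈ X, p ≠ q → d ≤ gdist p q)
    (v : EuclideanSpace ℝ (Fin 3)) (hv : v ∈ X) :
    (X.filter (fun y => y ≠ v ∧ gdist v y = d)).card ≤ 5 := by
  have : Fact (finrank ℝ (EuclideanSpace ℝ (Fin 3)) = 3) := ⟨finrank_euclideanSpace_fin⟩
  refine card_le_five_of_inner_eq_of_inner_le (c := cos d) (hunit v hv) _ (by simp)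
    (fun y hy => hunit y (Finset.mem_filter.1 hy).1) (fun y hy => ?_) (fun y hy z hz hyz => ?_)
  · obtain ⟨hyX, -, rfl⟩ := Finset.mem_filter.1 hy
    exact (cos_gdist (hunit v hv) (hunit y hyX)).symm
  · have hyX := (Finset.mem_filter.1 hy).1
    have hzX := (Finset.mem_filter.1 hz).1
    exact inner_le_cos_of_le_gdist (hunit y hyX) (hunit z hzX) hd.le (hmin y hyX z hzX hyz)
end
end

section
/- d₅ = d₆ = π/2: the maximum over 5-point (and over 6-point) subsets of S² of the minimal pairwise angular distance equals π/2; moreover for N = 5 the maximum is attained by non-congruent configurations (the optimal configuration is not unique up to isometry). -/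
/-!
The octahedron, and the two poles together with any three pairwise non-acute points of the
equator, have all pairwise inner products `≤ 0`. Conversely, `k` pairwise strictly obtuse
vectors in a space of dimension `d` satisfy `k ≤ d + 1`, because projecting the others onto the
orthogonal complement of one of them keeps them strictly obtuse; so five points of `S²` contain a
pair with `⟪p, q⟫ ≥ 0`. Two members of the five-point family are not congruent because an
isometry preserves the length of the sum of the points, which varies along the family.
-/

open scoped RealInnerProductSpace
open scoped Classical

noncomputable section

/-- `X` is an optimal configuration for the Tammes problem value `π/2`: all points are on
the unit sphere and pairwise at angular distance at least `π/2`. -/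
def IsOptimalConfig (n : ℕ) (X : Finset (EuclideanSpace ℝ (Fin 3))) : Prop :=
  X.card = n ∧ (∀ p ∈ X, ‖p‖ = 1) ∧
    ∀ p ∈ X, ∀ q ∈ X, p ≠ q → Real.pi / 2 ≤ gdist p q

open Module

section ObtuseFamilies

variable {E : Type*} [NormedAddCommGroup E] [InnerProductSpace ℝ E]

lemma inner_sub_smul_sub_smul_s15 (u x y : E) :
    ⟪x - (⟪u, x⟫ / ⟪u, u⟫) • u, y - (⟪u, y⟫ / ⟪u, u⟫) • u⟫ =
      ⟪x, y⟫ - ⟪u, x⟫ * ⟪u, y⟫ / ⟪u, u⟫ := by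
  rcases eq_or_ne ⟪u, u⟫ 0 with hu | hu
  · simp [inner_self_eq_zero.mp hu]
  · simp only [inner_sub_left, inner_sub_right, real_inner_smul_left, real_inner_smul_right,
      real_inner_comm u]
    field_simp
    ring

lemma inner_sub_smul_self_eq_zero {u : E} (hu : u ≠ 0) (x : E) :
    ⟪u, x - (⟪u, x⟫ / ⟪u, u⟫) • u⟫ = 0 := by
  rw [inner_sub_right, real_inner_smul_right, div_mul_cancel₀ _ (inner_self_ne_zero.mpr hu),
    sub_self]

theorem le_finrank_add_one_of_pairwise_inner_neg [FiniteDimensional ℝ E] {k : ℕ}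
    (v : Fin k → E) (hv : Pairwise fun i j => ⟪v i, v j⟫ < 0) : k ≤ finrank ℝ E + 1 := by
  induction k generalizing E with
  | zero => omega
  | succ k ih =>
    rcases Nat.eq_zero_or_pos k with rfl | hk
    · omega
    set u := v (Fin.last k)
    have hneg : ∀ i : Fin k, ⟪u, v i.castSucc⟫ < 0 := fun i =>
      hv (Fin.castSucc_lt_last i).ne'
    have hu : u ≠ 0 := by
      rintro h
      simpa [h] using hneg ⟨0, hk⟩
    have huu : 0 < ⟪u, u⟫ := real_inner_self_pos.mpr hu
    let K := (ℝ ∙ u)ᗮ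
    let w : Fin k → K := fun i =>
      ⟨v i.castSucc - (⟪u, v i.castSucc⟫ / ⟪u, u⟫) • u,
        Submodule.mem_orthogonal_singleton_iff_inner_right.mpr (inner_sub_smul_self_eq_zero hu _)⟩
    have hw : Pairwise fun i j => ⟪w i, w j⟫ < 0 := by
      intro i j hij
      have hvij : ⟪v i.castSucc, v j.castSucc⟫ < 0 := hv (Fin.castSucc_injective _ |>.ne hij)
      have : 0 < ⟪u, v i.castSucc⟫ * ⟪u, v j.castSucc⟫ / ⟪u, u⟫ :=
        div_pos (mul_pos_of_neg_of_neg (hneg i) (hneg j)) huu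
      change ⟪(w i : E), w j⟫ < 0
      rw [inner_sub_smul_sub_smul_s15]
      linarith
    have hK : finrank ℝ K + 1 = finrank ℝ E := by
      rw [← finrank_span_singleton (K := ℝ) hu, add_comm]
      exact Submodule.finrank_add_finrank_orthogonal _
    have := ih w hw
    omega

theorem Finset.exists_ne_inner_nonneg_of_finrank_add_one_lt_card [FiniteDimensional ℝ E]
    (s : Finset E) (hs : finrank ℝ E + 1 < s.card) :
    ∃ p ∈ s, ∃ q ∈ s, p ≠ q ∧ 0 ≤ ⟪p, q⟫ := by
  by_contra! h
  let e := s.equivFin.symm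
  have := le_finrank_add_one_of_pairwise_inner_neg (fun i => (e i : E))
    fun i j hij => h _ (e i).2 _ (e j).2 (fun h' => hij (e.injective (Subtype.ext h')))
  omega

lemma injective_of_pairwise_inner_nonpos {ι : Type*} {v : ι → E} (h0 : ∀ i, v i ≠ 0)
    (hv : Pairwise fun i j => ⟪v i, v j⟫ ≤ 0) : Function.Injective v := by
  intro i j hij
  by_contra hne
  have h : ⟪v i, v j⟫ ≤ 0 := hv hne
  rw [hij, real_inner_self_nonpos] at h
  exact h0 j h

end ObtuseFamilies

lemma norm_sum_eq_of_linearIsometryEquiv_image_eq {E : Type*} [NormedAddCommGroup E]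
    [InnerProductSpace ℝ E] (g : E ≃ₗᵢ[ℝ] E) {s t : Finset E} (hg : g '' s = t) :
    ‖∑ p ∈ t, p‖ = ‖∑ p ∈ s, p‖ := by
  rw [← Finset.coe_image, Finset.coe_inj] at hg
  rw [← hg, Finset.sum_image fun x _ y _ h => g.injective h, ← map_sum, g.norm_map]

local notation "ℝ³" => EuclideanSpace ℝ (Fin 3)

lemma inner_vec3 (a b c a' b' c' : ℝ) :
    ⟪!₂[a, b, c], !₂[a', b', c']⟫ = a * a' + b * b' + c * c' := by
  simp [PiLp.inner_apply, Fin.sum_univ_three]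
  ring

lemma norm_vec3 (a b c : ℝ) : ‖!₂[a, b, c]‖ = √(a ^ 2 + b ^ 2 + c ^ 2) := by
  simp [EuclideanSpace.norm_eq, Fin.sum_univ_three]

lemma gdist_le_pi_div_two {x y : ℝ³} (h : 0 ≤ ⟪x, y⟫) : gdist x y ≤ Real.pi / 2 :=
  Real.arccos_le_pi_div_two.mpr h

lemma pi_div_two_le_gdist {x y : ℝ³} (h : ⟪x, y⟫ ≤ 0) : Real.pi / 2 ≤ gdist x y := by
  rw [gdist, Real.arccos]
  linarith [Real.arcsin_nonpos.mpr h]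

lemma isOptimalConfig_image {n : ℕ} (v : Fin n → ℝ³) (hnorm : ∀ i, ‖v i‖ = 1)
    (hv : Pairwise fun i j => ⟪v i, v j⟫ ≤ 0) : IsOptimalConfig n (Finset.univ.image v) := by
  have hinj := injective_of_pairwise_inner_nonpos
    (fun i => norm_ne_zero_iff.mp (by simp [hnorm])) hv
  refine ⟨by simp [Finset.card_image_of_injective _ hinj], ?_, ?_⟩
  · simpa using hnorm
  · simp only [Finset.mem_image, Finset.mem_univ, true_and]
    rintro _ ⟨i, rfl⟩ _ ⟨j, rfl⟩ hij
    exact pi_div_two_le_gdist (hv fun h => hij (congrArg v h))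

lemma exists_ne_gdist_le_pi_div_two (X : Finset ℝ³) (hX : 5 ≤ X.card) :
    ∃ p ∈ X, ∃ q ∈ X, p ≠ q ∧ gdist p q ≤ Real.pi / 2 := by
  obtain ⟨p, hp, q, hq, hpq, h⟩ := X.exists_ne_inner_nonneg_of_finrank_add_one_lt_card
    (by rw [finrank_euclideanSpace_fin]; omega)
  exact ⟨p, hp, q, hq, hpq, gdist_le_pi_div_two h⟩

def octahedron : Fin 6 → ℝ³ :=
  ![!₂[1, 0, 0], !₂[-1, 0, 0], !₂[0, 1, 0], !₂[0, -1, 0], !₂[0, 0, 1], !₂[0, 0, -1]]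

lemma isOptimalConfig_octahedron : IsOptimalConfig 6 (Finset.univ.image octahedron) := by
  refine isOptimalConfig_image _ (fun i => ?_) fun i j hij => ?_
  · fin_cases i <;> simp [octahedron, norm_vec3]
  · fin_cases i <;> fin_cases j <;> simp_all [octahedron, inner_vec3]

def poleEquatorConfig (a b : ℝ) : Fin 5 → ℝ³ :=
  ![!₂[0, 0, 1], !₂[0, 0, -1], !₂[1, 0, 0], !₂[0, 1, 0], !₂[a, b, 0]]

lemma norm_poleEquatorConfig {a b : ℝ} (hab : a ^ 2 + b ^ 2 = 1) (i : Fin 5) :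
    ‖poleEquatorConfig a b i‖ = 1 := by
  fin_cases i <;> simp [poleEquatorConfig, norm_vec3, hab]

lemma pairwise_inner_poleEquatorConfig_nonpos {a b : ℝ} (ha : a ≤ 0) (hb : b ≤ 0) :
    Pairwise fun i j => ⟪poleEquatorConfig a b i, poleEquatorConfig a b j⟫ ≤ 0 := by
  intro i j hij
  fin_cases i <;> fin_cases j <;> simp_all [poleEquatorConfig, inner_vec3]

lemma isOptimalConfig_poleEquatorConfig {a b : ℝ} (hab : a ^ 2 + b ^ 2 = 1) (ha : a ≤ 0)
    (hb : b ≤ 0) : IsOptimalConfig 5 (Finset.univ.image (poleEquatorConfig a b)) :=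
  isOptimalConfig_image _ (norm_poleEquatorConfig hab)
    (pairwise_inner_poleEquatorConfig_nonpos ha hb)

lemma norm_sum_poleEquatorConfig {a b : ℝ} (hab : a ^ 2 + b ^ 2 = 1) (ha : a ≤ 0)
    (hb : b ≤ 0) :
    ‖∑ p ∈ Finset.univ.image (poleEquatorConfig a b), p‖ = √((1 + a) ^ 2 + (1 + b) ^ 2) := by
  have hinj := injective_of_pairwise_inner_nonpos
    (fun i => norm_ne_zero_iff.mp (by simp [norm_poleEquatorConfig hab]))
    (pairwise_inner_poleEquatorConfig_nonpos ha hb)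
  have hsum : ∑ i, poleEquatorConfig a b i = !₂[1 + a, 1 + b, 0] := by
    ext k
    fin_cases k <;> simp [poleEquatorConfig, Fin.sum_univ_five]
  rw [Finset.sum_image fun i _ j _ h => hinj h, hsum, norm_vec3]
  ring_nf

/-- `d₅ = d₆ = π/2`: five (resp. six) points on `S²` can be placed with all pairwise
angular distances at least `π/2`, and every 5-point (resp. 6-point) set on `S²` has two
points at angular distance at most `π/2`. Moreover, for `N = 5` the maximum is attained
by non-congruent configurations: there are two optimal configurations not related by any
isometry of the sphere. -/
theorem d_five_eq_d_six_eq_pi_div_two :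
    (∃ X, IsOptimalConfig 5 X) ∧
    (∃ X, IsOptimalConfig 6 X) ∧
    (∀ X : Finset (EuclideanSpace ℝ (Fin 3)), X.card = 5 → (∀ p ∈ X, ‖p‖ = 1) →
      ∃ p ∈ X, ∃ q ∈ X, p ≠ q ∧ gdist p q ≤ Real.pi / 2) ∧
    (∀ X : Finset (EuclideanSpace ℝ (Fin 3)), X.card = 6 → (∀ p ∈ X, ‖p‖ = 1) →
      ∃ p ∈ X, ∃ q ∈ X, p ≠ q ∧ gdist p q ≤ Real.pi / 2) ∧
    (∃ X Y : Finset (EuclideanSpace ℝ (Fin 3)),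
      IsOptimalConfig 5 X ∧ IsOptimalConfig 5 Y ∧
      ∀ g : EuclideanSpace ℝ (Fin 3) ≃ₗᵢ[ℝ] EuclideanSpace ℝ (Fin 3),
        g '' (X : Set (EuclideanSpace ℝ (Fin 3))) ≠ (Y : Set (EuclideanSpace ℝ (Fin 3)))) := by
  have hX := isOptimalConfig_poleEquatorConfig (a := -1) (b := 0) (by norm_num) (by norm_num) le_rfl
  have hY := isOptimalConfig_poleEquatorConfig (a := -3 / 5) (b := -4 / 5) (by norm_num)
    (by norm_num) (by norm_num)
  refine ⟨⟨_, hX⟩, ⟨_, isOptimalConfig_octahedron⟩,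
    fun X hX _ => exists_ne_gdist_le_pi_div_two X hX.ge,
    fun X hX _ => exists_ne_gdist_le_pi_div_two X (by omega), _, _, hX, hY, fun g hg => ?_⟩
  have hsum := norm_sum_eq_of_linearIsometryEquiv_image_eq g hg
  rw [norm_sum_poleEquatorConfig (by norm_num) (by norm_num) (by norm_num),
    norm_sum_poleEquatorConfig (by norm_num) (by norm_num) le_rfl] at hsum
  norm_num at hsum
end
end

section
/- If X ⊆ S² with |X| = N > 6 and the contact graph CG(X) has a vertex v of degree m ∈ {3,4,5} such that all faces incident to v are equilateral triangles with equal angles at v, then the common angle at v equals 2π/m, i.e. 120°, 90° or 72°; the cases 120° and 90° force configurations with N ≤ 6 (octahedron-type), so for N > 6 only the angle 72° (icosahedral triangle) is possible. -/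
open scoped RealInnerProductSpace

noncomputable section

/-- If around a vertex `v` of a contact graph all `m ∈ {3,4,5}` incident faces are
equilateral spherical triangles with side `d ∈ (0, π/2)` and equal angles `α` at `v`
(where `α` is given by the spherical law of cosines `cos d = cos²d + sin²d · cos α`),
then since the angles at `v` sum to `2π` the common angle equals `2π/m`; the cases
`α = 2π/3 = 120°` and `α = 2π/4 = 90°` are impossible (they force configurations with
`N ≤ 6`, of octahedron type, contradicting `d < π/2`), so only `α = 2π/5 = 72°` remains,
and then `cos d = 1/√5` (the icosahedral triangle). -/
theorem angles_around_vertex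
    (d α : ℝ) (hd0 : 0 < d) (hd : d < Real.pi / 2)
    (hα : Real.cos d = Real.cos d ^ 2 + Real.sin d ^ 2 * Real.cos α)
    (m : ℕ) (hm : m = 3 ∨ m = 4 ∨ m = 5)
    (hsum : (m : ℝ) * α = 2 * Real.pi) :
    α = 2 * Real.pi / m ∧
    (α = 2 * Real.pi / 3 → False) ∧
    (α = 2 * Real.pi / 4 → False) ∧
    (α = 2 * Real.pi / 5 → Real.cos d = 1 / Real.sqrt 5) := by
  have hpi := Real.pi_pos
  have hcpos : 0 < Real.cos d := Real.cos_pos_of_mem_Ioo ⟨by linarith, hd⟩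
  have hclt1 : Real.cos d < 1 := by
    have := Real.cos_lt_cos_of_nonneg_of_le_pi (le_refl 0) (by linarith) hd0
    simpa using this
  have hsin2 : Real.sin d ^ 2 = 1 - Real.cos d ^ 2 := by
    have := Real.sin_sq_add_cos_sq d; linarith
  rw [hsin2] at hα
  have hkey : Real.cos α * (1 + Real.cos d) = Real.cos d := by nlinarith
  have hm0 : (m : ℝ) ≠ 0 := by rcases hm with h | h | h <;> simp [h]
  refine ⟨by field_simp at hsum ⊢; linarith, ?_, ?_, ?_⟩
  · intro h
    have hc : Real.cos α = -(1/2) := by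
      rw [h]; rw [show (2:ℝ)*Real.pi/3 = Real.pi - Real.pi/3 by ring, Real.cos_pi_sub,
        Real.cos_pi_div_three]
    rw [hc] at hkey; nlinarith
  · intro h
    have hc : Real.cos α = 0 := by
      rw [h, show (2:ℝ)*Real.pi/4 = Real.pi/2 by ring, Real.cos_pi_div_two]
    rw [hc] at hkey; nlinarith
  · intro h
    have h5 : Real.sqrt 5 ^ 2 = 5 := Real.sq_sqrt (by norm_num)
    have h5pos : 0 < Real.sqrt 5 := Real.sqrt_pos.mpr (by norm_num)
    have hc : Real.cos α = (Real.sqrt 5 - 1) / 4 := by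
      rw [h, show (2:ℝ)*Real.pi/5 = 2*(Real.pi/5) by ring, Real.cos_two_mul,
        Real.cos_pi_div_five]
      nlinarith
    rw [hc] at hkey
    rw [eq_div_iff (ne_of_gt h5pos)]
    nlinarith
end
end
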